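/- arXiv:1310.6006 — 6 statements merged into one kernel-verified Lean document; each statement's English description precedes it below -/
import Mathlib

section
/- Let f1, f2, f3 be linear forms on ℂ², f_i(z1,z2) = a_i·z1 + b_i·z2 with complex coefficients, which are pairwise linearly independent (a_i·b_j − a_j·b_i ≠ 0 for all i ≠ j in {1,2,3}). Then both monomials z1² and z2² belong to the ideal of the polynomial ring ℂ[z1,z2] generated by the two polynomials f1·f2 and f3. -/
/-!
Modulo `f₃`, each variable times the nonzero determinant `det(fᵢ, f₃)` is a combination of `fᵢ`
and `f₃` (Cramer's rule), so `det(f₁, f₃) det(f₂, f₃) zₖ²` lies in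
`⟨f₁, f₃⟩ ⟨f₂, f₃⟩ ⊆ ⟨f₁ f₂, f₃⟩`; the determinants are nonzero constants, hence units.
-/

open MvPolynomial

namespace Ideal

variable {R : Type*} [CommRing R]

theorem span_pair_mul_span_pair_le (f g h : R) :
    span {f, h} * span {g, h} ≤ span {f * g, h} := by
  refine mul_le.mpr fun r hr s hs => ?_
  obtain ⟨u, v, rfl⟩ := mem_span_pair.mp hr
  obtain ⟨u', v', rfl⟩ := mem_span_pair.mp hs
  exact mem_span_pair.mpr ⟨u * u', u * v' * f + v * (u' * g + v' * h), by ring⟩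

theorem det_mul_left_mem_span_pair (a b c d x y : R) :
    (a * d - c * b) * x ∈ span {a * x + b * y, c * x + d * y} :=
  mem_span_pair.mpr ⟨d, -b, by ring⟩

theorem det_mul_right_mem_span_pair (a b c d x y : R) :
    (a * d - c * b) * y ∈ span {a * x + b * y, c * x + d * y} :=
  mem_span_pair.mpr ⟨-c, a, by ring⟩

theorem sq_mem_span_mul_pair {f g h z s t : R} (hs : s * z ∈ span {f, h})
    (ht : t * z ∈ span {g, h}) (hst : IsUnit (s * t)) : z ^ 2 ∈ span {f * g, h} := by
  rw [← unit_mul_mem_iff_mem _ hst]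
  have hmul : s * z * (t * z) ∈ span {f, h} * span {g, h} := mul_mem_mul hs ht
  convert span_pair_mul_span_pair_le f g h hmul using 1
  ring

end Ideal

theorem sq_mem_span (a b : Fin 3 → ℂ)
    (h : ∀ i j : Fin 3, i ≠ j → a i * b j - a j * b i ≠ 0) :
    (X 0 ^ 2 : MvPolynomial (Fin 2) ℂ) ∈
        Ideal.span ({(C (a 0) * X 0 + C (b 0) * X 1) * (C (a 1) * X 0 + C (b 1) * X 1),
          C (a 2) * X 0 + C (b 2) * X 1} : Set (MvPolynomial (Fin 2) ℂ)) ∧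
      (X 1 ^ 2 : MvPolynomial (Fin 2) ℂ) ∈
        Ideal.span ({(C (a 0) * X 0 + C (b 0) * X 1) * (C (a 1) * X 0 + C (b 1) * X 1),
          C (a 2) * X 0 + C (b 2) * X 1} : Set (MvPolynomial (Fin 2) ℂ)) := by
  have hdet : ∀ i, i ≠ 2 →
      IsUnit (C (a i) * C (b 2) - C (a 2) * C (b i) : MvPolynomial (Fin 2) ℂ) := fun i hi => by
    rw [← map_mul, ← map_mul, ← map_sub]
    exact (isUnit_iff_ne_zero.mpr (h i 2 hi)).map C
  have hunit := (hdet 0 (by decide)).mul (hdet 1 (by decide))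
  refine ⟨Ideal.sq_mem_span_mul_pair ?_ ?_ hunit, Ideal.sq_mem_span_mul_pair ?_ ?_ hunit⟩
  · exact Ideal.det_mul_left_mem_span_pair _ _ _ _ _ (X 1)
  · exact Ideal.det_mul_left_mem_span_pair _ _ _ _ _ (X 1)
  · exact Ideal.det_mul_right_mem_span_pair _ _ _ _ (X 0) _
  · exact Ideal.det_mul_right_mem_span_pair _ _ _ _ (X 0) _
end

section
/- Let χ be a complex number with χ ≠ 0 and χ ≠ −1, let z1 be a nonzero complex number, and let z2 be any complex number. Then the assignment α3 = (1+1/χ)·(1+z1), α4 = 0, β3 = 0, β4 = −1 − 1/((1+χ)·z1), γ1 = (1/χ)·(1+z2)·(1+(1+χ)·z1), γ2 = (1/χ)·(1+1/z1)·z2, γ3 = −((1+χ)/χ + 1/(χ·z1))·z2, γ4 = −(1/χ)·(1+z1)·(1+z2) satisfies all six equations of the deca-cut parameter system. -/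
/-- The six deca-cut equations for the massless four-point planar triple box,
after imposing `α1 = α2 = β1 = β2 = 0`. -/
def DecaCut (χ α3 α4 β3 β4 γ1 γ2 γ3 γ4 : ℂ) : Prop :=
  α3 * α4 = 0 ∧
  β3 * β4 = 0 ∧
  γ1 * γ2 - γ3 * γ4 = 0 ∧
  1 + γ1 - γ2 - γ3 + (1 + χ) * γ4 + χ * (γ1 * γ2 - γ3 * γ4) = 0 ∧
  -α3 * (α4 + χ * (γ2 + γ3 / (1 + χ))) + χ * (γ2 * (1 + γ1) - γ3 * γ4) +
      (1 + χ) * α4 * (γ2 - γ4) = 0 ∧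
  -(γ4 + β3 / (1 + χ)) * ((1 + χ) * β4 + χ * γ3) -
      γ1 * (β4 + (1 - γ2 - β3 + β4) * χ) = 0

/-! With `u = 1 + z1` and `v = 1 + (1 + χ) z1` the parametrisation reads
`γ1 = v (1 + z2) / χ`, `γ2 = u z2 / (χ z1)`, `γ3 = -v z2 / (χ z1)`, `γ4 = -u (1 + z2) / χ`,
so it lies on the quadric `γ1 γ2 = γ3 γ4`. On that quadric, and with `α4 = β3 = 0`, the remaining
equations lose their quadratic terms and become rational identities in `χ, z1, z2`, checked by
clearing the denominators `χ`, `z1` and `1 + χ`. -/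

theorem decaCut_of_quadric {χ α3 β4 γ1 γ2 γ3 γ4 : ℂ} (hquad : γ1 * γ2 = γ3 * γ4)
    (h4 : 1 + γ1 - γ2 - γ3 + (1 + χ) * γ4 = 0)
    (h5 : α3 * (γ2 + γ3 / (1 + χ)) = γ2)
    (h6 : γ4 * ((1 + χ) * β4 + χ * γ3) + γ1 * (β4 + (1 - γ2 + β4) * χ) = 0) :
    DecaCut χ α3 0 0 β4 γ1 γ2 γ3 γ4 := by
  refine ⟨mul_zero α3, zero_mul β4, sub_eq_zero.mpr hquad, ?_, ?_, ?_⟩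
  · linear_combination h4 + χ * hquad
  · linear_combination χ * hquad - χ * h5
  · linear_combination -h6

theorem branch_S2 (χ z1 z2 : ℂ) (hχ : χ ≠ 0) (hχ' : χ ≠ -1) (hz1 : z1 ≠ 0) :
    DecaCut χ
      ((1 + 1 / χ) * (1 + z1)) 0
      0 (-1 - 1 / ((1 + χ) * z1))
      ((1 / χ) * (1 + z2) * (1 + (1 + χ) * z1))
      ((1 / χ) * (1 + 1 / z1) * z2)
      (-((1 + χ) / χ + 1 / (χ * z1)) * z2)
      (-(1 / χ) * (1 + z1) * (1 + z2)) := by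
  have hχ1 : 1 + χ ≠ 0 := fun h => hχ' (by linear_combination h)
  apply decaCut_of_quadric <;>
  · field_simp
    ring
end

section
/- Let χ be a complex number with χ ≠ 0 and χ ≠ −1, let z1 be a nonzero complex number, and let z2 be any complex number. Then the assignment α3 = z2, α4 = 0, β3 = 0, β4 = −1−z1, γ1 = (1/χ)·(1+1/z1), γ2 = 0, γ3 = 0, γ4 = −(1/χ)·(1 + (1/(1+χ))·(1/z1)) satisfies all six equations of the deca-cut parameter system. -/
/-! On the sub-branch `α4 = β3 = γ2 = γ3 = 0` the first, second, third and fifth equations hold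
identically, so only a linear relation between `γ1` and `γ4` and one equation fixing `β4` remain;
the given assignment satisfies both once the denominators `χ`, `1 + χ` and `z1` are cleared. -/

theorem decaCut_alpha4_beta3_gamma2_gamma3_zero_iff (χ α3 β4 γ1 γ4 : ℂ) :
    DecaCut χ α3 0 0 β4 γ1 0 0 γ4 ↔
      1 + γ1 + (1 + χ) * γ4 = 0 ∧ (1 + χ) * γ4 * β4 + γ1 * (β4 + (1 + β4) * χ) = 0 := by
  simp only [DecaCut, mul_zero, zero_mul, sub_zero, add_zero, zero_div, true_and]
  constructor
  · rintro ⟨hlin, hβ4⟩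
    exact ⟨hlin, by linear_combination -hβ4⟩
  · rintro ⟨hlin, hβ4⟩
    exact ⟨hlin, by linear_combination -hβ4⟩

theorem branch_S3 (χ z1 z2 : ℂ) (hχ : χ ≠ 0) (hχ' : χ ≠ -1) (hz1 : z1 ≠ 0) :
    DecaCut χ
      z2 0
      0 (-1 - z1)
      ((1 / χ) * (1 + 1 / z1))
      0
      0
      (-(1 / χ) * (1 + (1 / (1 + χ)) * (1 / z1))) := by
  have h1χ : 1 + χ ≠ 0 := fun h => hχ' (by linear_combination h)
  rw [decaCut_alpha4_beta3_gamma2_gamma3_zero_iff]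
  constructor
  · field_simp
    ring
  · field_simp
    ring
end

section
/- Let χ be a complex number with χ ≠ 0 and χ ≠ −1, let z1 be a nonzero complex number, and let z2 be any complex number. Then the assignment α3 = (1+1/χ)·(1+z1), α4 = 0, β3 = 0, β4 = z2, γ1 = 0, γ2 = −(1/χ)·(1+1/z1), γ3 = 1/(χ·z1) + (1+χ)/χ, γ4 = 0 satisfies all six equations of the deca-cut parameter system. -/
theorem branch_S4 (χ z1 z2 : ℂ) (hχ : χ ≠ 0) (hχ' : χ ≠ -1) (hz1 : z1 ≠ 0) :
    DecaCut χ
      ((1 + 1 / χ) * (1 + z1)) 0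
      0 z2
      0
      (-(1 / χ) * (1 + 1 / z1))
      (1 / (χ * z1) + (1 + χ) / χ)
      0 := by
  have h1χ : 1 + χ ≠ 0 := fun h ↦ hχ' (eq_neg_of_add_eq_zero_right h)
  refine ⟨by ring, by ring, by ring, ?_, ?_, by ring⟩
  · field_simp
    ring
  · field_simp
    ring
end

section
/- Let χ be a complex number with χ ≠ 0 and χ ≠ −1, and let z1, z2 be any complex numbers. Then the assignment α3 = z2, α4 = 0, β3 = 1, β4 = 0, γ1 = z1, γ2 = 0, γ3 = 0, γ4 = −(1+z1)/(1+χ) satisfies all six equations of the deca-cut parameter system. -/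
theorem branch_S5_general (χ z1 z2 : ℂ) (hχ' : χ ≠ -1) :
    DecaCut χ
      z2 0
      1 0
      z1 0 0 (-(1 + z1) / (1 + χ)) := by
  have h : 1 + χ ≠ 0 := fun h => hχ' (eq_neg_of_add_eq_zero_right h)
  refine ⟨by ring, by ring, by ring, ?_, by ring, by ring⟩
  field_simp
  ring

theorem branch_S5 (χ z1 z2 : ℂ) (hχ : χ ≠ 0) (hχ' : χ ≠ -1) :
    DecaCut χ
      z2 0
      1 0
      z1 0 0 (-(1 + z1) / (1 + χ)) :=
  branch_S5_general χ z1 z2 hχ'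
end

section
/- Let χ be a complex number with χ ≠ 0 and χ ≠ −1, and let z1, z2 be any complex numbers. Then the assignment α3 = 1, α4 = 0, β3 = z2, β4 = 0, γ1 = 0, γ2 = z1, γ3 = 0, γ4 = −(1−z1)/(1+χ) satisfies all six equations of the deca-cut parameter system. -/
/- On this slice every equation except the fourth holds identically. -/
theorem decaCut_one_zero_zero_zero_zero_iff (χ β3 γ2 γ4 : ℂ) :
    DecaCut χ 1 0 β3 0 0 γ2 0 γ4 ↔ 1 - γ2 + (1 + χ) * γ4 = 0 := by
  simp only [DecaCut, mul_zero, zero_mul, sub_zero, add_zero, zero_add, zero_div, mul_one,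
    neg_mul, one_mul, true_and, and_true]
  constructor
  · intro h; linear_combination h.1
  · intro h; exact ⟨by linear_combination h, by ring⟩

theorem branch_S6_general (χ z1 z2 : ℂ) (hχ' : χ ≠ -1) :
    DecaCut χ
      1 0
      z2 0
      0 z1 0 (-(1 - z1) / (1 + χ)) := by
  have hχ : 1 + χ ≠ 0 := fun h => hχ' (by linear_combination h)
  rw [decaCut_one_zero_zero_zero_zero_iff, mul_div_cancel₀ _ hχ]
  ring

theorem branch_S6 (χ z1 z2 : ℂ) (hχ : χ ≠ 0) (hχ' : χ ≠ -1) :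
    DecaCut χ
      1 0
      z2 0
      0 z1 0 (-(1 - z1) / (1 + χ)) :=
  branch_S6_general χ z1 z2 hχ'
end
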